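/- Let (X_i) be a stationary sequence adapted to a stationary filtration (F_i) with S_n = X₁+⋯+X_n. If Σ_{r≥0} ||E(S_{2^r}|F₀)||_2 / 2^{r/2} < ∞, then Σ_{k≥1} ||E(S_k|F₀)||_2 / k^{3/2} < ∞. -/

import Mathlib

open MeasureTheory ProbabilityTheory Finset

noncomputable section

/-! Splitting `k` in binary, subadditivity gives `a k ≤ ∑_{j ≤ r} a (2 ^ j)` on the dyadic block
`2 ^ r ≤ k < 2 ^ (r + 1)`, so that block contributes at most `2 ^ (-r/2) ∑_{j ≤ r} a (2 ^ j)` to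
`∑ a k / k ^ (3/2)`. Summed over `r`, this is the Cauchy product of `∑ a (2 ^ j) / 2 ^ (j/2)`
with a geometric series of ratio `2 ^ (-1/2)`. -/

theorem Finset.sum_range_two_pow {M : Type*} [AddCommMonoid M] (f : ℕ → M) (R : ℕ) :
    ∑ k ∈ range (2 ^ R), f k = f 0 + ∑ r ∈ range R, ∑ k ∈ Ico (2 ^ r) (2 ^ (r + 1)), f k := by
  induction R with
  | zero => simp
  | succ R ih =>
    rw [sum_range_succ, ← add_assoc, ← ih,
      sum_range_add_sum_Ico _ (Nat.pow_le_pow_right two_pos R.le_succ)]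

theorem summable_sum_range_div_pow {b : ℕ → ℝ} (hb : ∀ j, 0 ≤ b j) {c : ℝ} (hc : 1 < c)
    (h : Summable fun j => b j / c ^ j) :
    Summable fun r => (∑ j ∈ range (r + 1), b j) / c ^ r := by
  have hc0 : 0 < c := one_pos.trans hc
  have hgeom : Summable fun i : ℕ => c⁻¹ ^ i :=
    summable_geometric_of_lt_one (by positivity) (inv_lt_one_of_one_lt₀ hc)
  have hprod : Summable fun x : ℕ × ℕ => b x.1 / c ^ x.1 * c⁻¹ ^ x.2 :=
    h.mul_of_nonneg hgeom (fun j => div_nonneg (hb j) (by positivity)) fun i => by positivity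
  refine (summable_sum_mul_range_of_summable_mul (f := fun j => b j / c ^ j)
    (g := fun i => c⁻¹ ^ i) hprod).congr fun r => ?_
  rw [sum_div]
  refine sum_congr rfl fun j hj => ?_
  rw [← pow_mul_pow_sub c (Nat.le_of_lt_succ (mem_range.1 hj)), inv_pow]
  field_simp

theorem Real.rpow_three_halves_eq_mul_sqrt {x : ℝ} (hx : 0 ≤ x) : x ^ (3 / 2 : ℝ) = x * √x := by
  rw [show (3 / 2 : ℝ) = 1 + 1 / 2 by norm_num, Real.rpow_add' hx (by norm_num), Real.rpow_one,
    Real.sqrt_eq_rpow]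

theorem Real.sqrt_pow {x : ℝ} (hx : 0 ≤ x) (n : ℕ) : √(x ^ n) = √x ^ n := by
  rw [Real.sqrt_eq_rpow, Real.sqrt_eq_rpow, Real.rpow_pow_comm hx]

section Subadditive

variable {a : ℕ → ℝ} (h0 : ∀ n, 0 ≤ a n) (hsub : ∀ m n, a (m + n) ≤ a m + a n)
include h0 hsub

theorem le_sum_range_two_pow_of_subadditive {r k : ℕ} (hk0 : 0 < k) (hk : k < 2 ^ r) :
    a k ≤ ∑ j ∈ range r, a (2 ^ j) := by
  induction r generalizing k with
  | zero => omega
  | succ r ih =>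
    rw [sum_range_succ]
    rcases lt_or_ge k (2 ^ r) with hlt | hge
    · linarith [ih hk0 hlt, h0 (2 ^ r)]
    obtain ⟨m, rfl⟩ := Nat.exists_eq_add_of_le hge
    rcases Nat.eq_zero_or_pos m with rfl | hm
    · simpa using sum_nonneg fun j _ => h0 (2 ^ j)
    · have := ih hm (by rw [pow_succ] at hk; omega)
      linarith [hsub (2 ^ r) m]

theorem sum_Ico_two_pow_div_rpow_le_of_subadditive (r : ℕ) :
    ∑ k ∈ Ico (2 ^ r) (2 ^ (r + 1)), a k / (k : ℝ) ^ (3 / 2 : ℝ) ≤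
      (∑ j ∈ range (r + 1), a (2 ^ j)) / √2 ^ r := by
  set B := ∑ j ∈ range (r + 1), a (2 ^ j)
  have hB : 0 ≤ B := sum_nonneg fun j _ => h0 (2 ^ j)
  have hterm : ∀ k ∈ Ico (2 ^ r) (2 ^ (r + 1)), a k / (k : ℝ) ^ (3 / 2 : ℝ) ≤
      B / (2 ^ r * √2 ^ r) := by
    intro k hk
    obtain ⟨hlo, hhi⟩ := mem_Ico.1 hk
    have hlo' : (2 : ℝ) ^ r ≤ k := by exact_mod_cast hlo
    rw [Real.rpow_three_halves_eq_mul_sqrt k.cast_nonneg, ← Real.sqrt_pow two_pos.le]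
    exact div_le_div₀ hB
      (le_sum_range_two_pow_of_subadditive h0 hsub (Nat.one_le_two_pow.trans hlo) hhi)
      (by positivity) (by gcongr)
  calc _ ≤ ∑ _k ∈ Ico (2 ^ r) (2 ^ (r + 1)), B / (2 ^ r * √2 ^ r) := sum_le_sum hterm
    _ = B / √2 ^ r := by
      rw [sum_const, Nat.card_Ico, pow_succ, mul_two, Nat.add_sub_cancel, nsmul_eq_mul]
      push_cast
      field_simp

theorem summable_div_rpow_three_halves_of_subadditive
    (hdyad : Summable fun r : ℕ => a (2 ^ r) / (2 : ℝ) ^ ((r : ℝ) / 2)) :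
    Summable fun k : ℕ => a (k + 1) / ((k : ℝ) + 1) ^ ((3 : ℝ) / 2) := by
  have hdyad' : Summable fun r : ℕ => a (2 ^ r) / √2 ^ r := by
    simpa only [Real.rpow_div_two_eq_sqrt _ two_pos.le, Real.rpow_natCast] using hdyad
  have hblocks := summable_sum_range_div_pow (fun j => h0 (2 ^ j))
    Real.one_lt_sqrt_two hdyad'
  suffices Summable fun k : ℕ => a k / (k : ℝ) ^ (3 / 2 : ℝ) by
    simpa using (summable_nat_add_iff 1).2 this
  refine summable_of_sum_range_le (c := ∑' r, (∑ j ∈ range (r + 1), a (2 ^ j)) / √2 ^ r)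
    (fun k => div_nonneg (h0 k) (by positivity)) fun n => ?_
  calc ∑ k ∈ range n, a k / (k : ℝ) ^ (3 / 2 : ℝ)
      ≤ ∑ k ∈ range (2 ^ n), a k / (k : ℝ) ^ (3 / 2 : ℝ) :=
        sum_le_sum_of_subset_of_nonneg (range_subset_range.2 Nat.lt_two_pow_self.le)
          fun k _ _ => div_nonneg (h0 k) (by positivity)
    _ ≤ ∑ r ∈ range n, (∑ j ∈ range (r + 1), a (2 ^ j)) / √2 ^ r := by
        -- the `k = 0` term is `a 0 / 0 ^ (3 / 2) = 0`
        rw [sum_range_two_pow]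
        simpa using sum_le_sum fun r _ => sum_Ico_two_pow_div_rpow_le_of_subadditive h0 hsub r
    _ ≤ _ := hblocks.sum_le_tsum _ fun r _ => div_nonneg (sum_nonneg fun j _ => h0 _)
        (by positivity)

end Subadditive

theorem stmt5_general {Ω : Type*} [m : MeasurableSpace Ω] (μ : Measure Ω)
    (F₀ : MeasurableSpace Ω)
    (S : ℕ → Ω → ℝ)
    (hsubadd : ∀ m' n : ℕ, (eLpNorm (μ[S (m' + n)|F₀]) 2 μ).toReal ≤
      (eLpNorm (μ[S m'|F₀]) 2 μ).toReal + (eLpNorm (μ[S n|F₀]) 2 μ).toReal)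
    (hdyad : Summable fun r : ℕ =>
      (eLpNorm (μ[S (2 ^ r)|F₀]) 2 μ).toReal / (2 : ℝ) ^ ((r : ℝ) / 2)) :
    Summable fun k : ℕ =>
      (eLpNorm (μ[S (k + 1)|F₀]) 2 μ).toReal / ((k : ℝ) + 1) ^ ((3 : ℝ) / 2) :=
  summable_div_rpow_three_halves_of_subadditive (a := fun n => (eLpNorm (μ[S n|F₀]) 2 μ).toReal) (fun _ => ENNReal.toReal_nonneg) hsubadd hdyad

/-- If `Σ_r ‖E(S_{2^r}|F₀)‖₂ / 2^{r/2} < ∞` then the Maxwell–Woodroofe condition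
`Σ_k ‖E(S_k|F₀)‖₂ / k^{3/2} < ∞` holds, for a stationary adapted sequence. -/
theorem stmt5 {Ω : Type*} [m : MeasurableSpace Ω] (μ : Measure Ω) [IsProbabilityMeasure μ]
    (T : Ω → Ω) (hT : MeasurePreserving T μ μ) (hTbij : Function.Bijective T)
    (F₀ : MeasurableSpace Ω) (hF₀ : F₀ ≤ m)
    (hF₀T : F₀ ≤ F₀.comap T)
    (X : ℕ → Ω → ℝ)
    (hX0meas : Measurable[F₀] (X 0))
    (hX0 : MemLp (X 0) 2 μ) (hX0c : ∫ ω, X 0 ω ∂μ = 0)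
    (hstat : ∀ i, X i = X 0 ∘ T^[i])
    (S : ℕ → Ω → ℝ) (hS : ∀ n, S n = fun ω => ∑ i ∈ Finset.Icc 1 n, X i ω)
    (hsubadd : ∀ m' n : ℕ, (eLpNorm (μ[S (m' + n)|F₀]) 2 μ).toReal ≤
      (eLpNorm (μ[S m'|F₀]) 2 μ).toReal + (eLpNorm (μ[S n|F₀]) 2 μ).toReal)
    (hdyad : Summable fun r : ℕ =>
      (eLpNorm (μ[S (2 ^ r)|F₀]) 2 μ).toReal / (2 : ℝ) ^ ((r : ℝ) / 2)) :
    Summable fun k : ℕ =>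
      (eLpNorm (μ[S (k + 1)|F₀]) 2 μ).toReal / ((k : ℝ) + 1) ^ ((3 : ℝ) / 2) :=
  stmt5_general (m := m) μ F₀ S hsubadd hdyad
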